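/- arXiv:math/0504566 — 4 statements merged into one kernel-verified Lean document; each statement's English description precedes it below -/
import Mathlib

section
/- In a right-angled Coxeter group Γ with word metric d, for any three elements α, β, γ ∈ Γ there exists δ ∈ Γ lying between each pair: d(α, δ) + d(δ, β) = d(α, β), d(α, δ) + d(δ, γ) = d(α, γ), and d(β, δ) + d(δ, γ) = d(β, γ). -/
/-!
Translating by `α⁻¹`, it suffices to find a point between each two of `1`, `b` and `c`. Common left
descents of `b` and `c` can be peeled off one at a time; once there are none, `1` itself works,
because in a right-angled Coxeter group `ℓ (b⁻¹ * c) = ℓ b + ℓ c` as soon as `b` and `c` have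
no common left descent. This additivity rests on the fact that two left descents of one element
commute: if `s i * s j` had infinite order, the two alternating words in `s i`, `s j` would shorten
the element forever. Both facts are driven by the strong exchange condition, obtained from Tits'
reflection cocycle: conjugation by `s i` carries the left inversions of `w` other than `s i` to
those of `s i * w`.
-/

namespace CoxeterMatrix

variable {B : Type*} {M : CoxeterMatrix B}

def IsRightAngled (M : CoxeterMatrix B) : Prop :=
  ∀ i j : B, i ≠ j → M i j = 0 ∨ M i j = 2

theorem IsRightAngled.isLiftable (hM : M.IsRightAngled) {G : Type*} [Monoid G] {f : B → G}
    (hsq : ∀ i, f i * f i = 1)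
    (hcomm : ∀ i j, M i j = 2 → Commute (f i) (f j)) : M.IsLiftable f := by
  intro i j
  by_cases hij : i = j
  · rw [hij, M.diagonal, pow_one, hsq]
  rcases hM i j hij with h0 | h2
  · rw [h0, pow_zero]
  · rw [h2, (hcomm i j h2).mul_pow, sq, sq, hsq, hsq, one_mul]

theorem IsRightAngled.isLiftable_dihedral [DecidableEq B] (hM : M.IsRightAngled) {i j : B}
    (hij : i ≠ j) (h0 : M i j = 0) :
    M.IsLiftable fun k => if k = i then DihedralGroup.sr (0 : ZMod 0)
      else if k = j then DihedralGroup.sr 1 else 1 := by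
  refine hM.isLiftable (fun k => ?_) fun a b hab => ?_
  · split_ifs <;> simp
  · rcases eq_or_ne a b with rfl | hne
    · exact Commute.refl _
    by_cases ha : a = i ∨ a = j <;> by_cases hb : b = i ∨ b = j
    · rcases ha with rfl | rfl <;> rcases hb with rfl | rfl <;> simp_all [M.symmetric]
    all_goals simp_all

end CoxeterMatrix

namespace CoxeterSystem

variable {B W : Type*} [Group W] {M : CoxeterMatrix B} (cs : CoxeterSystem M W)

local prefix:100 "s" => cs.simple
local prefix:100 "π" => cs.wordProd
local prefix:100 "ℓ" => cs.length
local prefix:100 "lis" => cs.leftInvSeq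

theorem commute_simple_of_eq_two {i j : B} (h : M i j = 2) : Commute (s i) (s j) := by
  have h1 : s i * s j * (s i * s j) = 1 := by rw [← sq, ← h, simple_mul_simple_pow]
  rw [Commute, SemiconjBy, mul_eq_one_iff_eq_inv.mp h1, mul_inv_rev, inv_simple, inv_simple]

theorem simple_conj_simple_conj (i : B) (x : W) : s i * (s i * x * s i) * s i = x := by
  simp [mul_assoc]

theorem simple_conj_eq_iff (i : B) (x y : W) : s i * x * s i = y ↔ x = s i * y * s i := by
  constructor <;> rintro rfl <;> simp [mul_assoc]

theorem simple_conj_eq_simple_iff (i : B) (x : W) : s i * x * s i = s i ↔ x = s i := by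
  rw [simple_conj_eq_iff]; simp

section ReflectionCocycle

open scoped Classical

noncomputable def simpleConjPerm (i : B) : Equiv.Perm (W × ZMod 2) :=
  Function.Involutive.toPerm (fun p => (s i * p.1 * s i, p.2 + if p.1 = s i then 1 else 0)) <| by
    rintro ⟨x, ε⟩
    simp only [simple_conj_simple_conj, simple_conj_eq_simple_iff, add_assoc,
      CharTwo.add_self_eq_zero, add_zero]

theorem simpleConjPerm_apply (i : B) (x : W) (ε : ZMod 2) :
    cs.simpleConjPerm i (x, ε) = (s i * x * s i, ε + if x = s i then 1 else 0) :=
  rfl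

theorem simpleConjPerm_mul_self (i : B) : cs.simpleConjPerm i * cs.simpleConjPerm i = 1 :=
  Equiv.ext (Function.Involutive.toPerm_involutive _)

theorem commute_simpleConjPerm {i j : B} (h : Commute (s i) (s j)) :
    Commute (cs.simpleConjPerm i) (cs.simpleConjPerm j) := by
  have hij : s i * s j * s i = s j := by rw [h.eq, mul_assoc, simple_mul_simple_self, mul_one]
  have hji : s j * s i * s j = s i := by rw [← h.eq, mul_assoc, simple_mul_simple_self, mul_one]
  refine Equiv.ext fun ⟨x, ε⟩ => ?_
  simp only [Equiv.Perm.mul_apply, simpleConjPerm_apply, Prod.mk.injEq]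
  constructor
  · simp only [← mul_assoc, h.eq]
    simp only [mul_assoc, ← h.eq]
  · rw [cs.simple_conj_eq_iff j x, cs.simple_conj_eq_iff i x, hij, hji]
    abel

noncomputable def parityAction (hM : M.IsRightAngled) : W →* Equiv.Perm (W × ZMod 2) :=
  cs.lift ⟨cs.simpleConjPerm, hM.isLiftable cs.simpleConjPerm_mul_self
    fun _ _ h => cs.commute_simpleConjPerm (cs.commute_simple_of_eq_two h)⟩

variable (hM : M.IsRightAngled)
include hM

theorem parityAction_simple (i : B) : cs.parityAction hM (s i) = cs.simpleConjPerm i :=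
  cs.lift_apply_simple _ i

theorem parityAction_apply (w t : W) (ε : ZMod 2) :
    cs.parityAction hM w (t, ε) = (w * t * w⁻¹, ε + (cs.parityAction hM w (t, 0)).2) := by
  induction w using cs.simple_induction generalizing t ε with
  | simple i => simp [parityAction_simple, simpleConjPerm_apply]
  | one => simp
  | mul u v hu hv =>
    rw [map_mul, Equiv.Perm.mul_apply, Equiv.Perm.mul_apply, hv t, hu (v * t * v⁻¹), hv t 0,
      hu (v * t * v⁻¹) (0 + _)]
    simp only [zero_add, add_assoc, mul_inv_rev, mul_assoc]

/-- Tits' reflection cocycle. By `inversionParity_wordProd` it is the parity of the number of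
occurrences of `t` in the left inversion sequence of any word for `w`; defining it through an
action of `W` makes this parity independent of the word. -/
noncomputable def inversionParity (w t : W) : ZMod 2 := (cs.parityAction hM w⁻¹ (t, 0)).2

theorem inversionParity_one (t : W) : cs.inversionParity hM 1 t = 0 := by
  simp [inversionParity]

theorem inversionParity_mul (u v t : W) :
    cs.inversionParity hM (u * v) t =
      cs.inversionParity hM u t + cs.inversionParity hM v (u⁻¹ * t * u) := by
  simp only [inversionParity, mul_inv_rev, map_mul, Equiv.Perm.mul_apply]
  rw [cs.parityAction_apply hM u⁻¹, cs.parityAction_apply hM v⁻¹, inv_inv, zero_add]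

theorem inversionParity_simple (i : B) (t : W) :
    cs.inversionParity hM (s i) t = if t = s i then 1 else 0 := by
  simp [inversionParity, parityAction_simple, simpleConjPerm_apply]

theorem inversionParity_wordProd (ω : List B) (t : W) :
    cs.inversionParity hM (π ω) t = ((lis ω).count t : ZMod 2) := by
  induction ω generalizing t with
  | nil => simp [inversionParity_one]
  | cons i ω ih =>
    have hcount :
        (lis (i :: ω)).count t = (lis ω).count (s i * t * s i) + if t = s i then 1 else 0 := by
      rw [leftInvSeq, List.count_cons,
        ← List.count_map_of_injective _ _ (MulAut.conj (s i)).injective (s i * t * s i)]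
      simp [mul_assoc, @eq_comm _ (s i) t]
    rw [wordProd_cons, inversionParity_mul, inversionParity_simple, inv_simple, ih, hcount]
    push_cast
    ring

theorem inversionParity_inv (w t : W) :
    cs.inversionParity hM w⁻¹ t = cs.inversionParity hM w (w * t * w⁻¹) := by
  have h := cs.inversionParity_mul hM w w⁻¹ (w * t * w⁻¹)
  rw [mul_inv_cancel, inversionParity_one] at h
  simp only [inv_mul_cancel_left, mul_assoc, inv_mul_cancel, mul_one] at h
  rw [mul_assoc w t, eq_comm, ← CharTwo.add_eq_zero]
  exact h.symm

theorem inversionParity_self {t : W} (ht : cs.IsReflection t) : cs.inversionParity hM t t = 1 := by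
  obtain ⟨w, i, rfl⟩ := ht
  have e1 : w⁻¹ * (w * s i * w⁻¹) * w = s i := by group
  have e2 : w * ((w * s i)⁻¹ * (w * s i * w⁻¹) * (w * s i)) * w⁻¹ = w * s i * w⁻¹ := by
    group
  rw [inversionParity_mul, inversionParity_mul, inversionParity_simple, inversionParity_inv, e1, e2,
    if_pos rfl, add_right_comm, CharTwo.add_self_eq_zero, zero_add]

theorem isLeftInversion_of_inversionParity_eq_one {w t : W} (h : cs.inversionParity hM w t = 1) :
    cs.IsLeftInversion w t := by
  obtain ⟨ω, hω, rfl⟩ := cs.exists_isReduced w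
  rw [inversionParity_wordProd] at h
  refine cs.isLeftInversion_of_mem_leftInvSeq hω (List.count_pos_iff.mp (Nat.pos_of_ne_zero ?_))
  rintro h0
  simp [h0] at h

/-- The strong exchange condition. -/
theorem isLeftInversion_iff_inversionParity_eq_one {w t : W} :
    cs.IsLeftInversion w t ↔ cs.inversionParity hM w t = 1 := by
  refine ⟨fun ⟨ht, hlt⟩ => ?_, cs.isLeftInversion_of_inversionParity_eq_one hM⟩
  by_contra hne
  have h1 : cs.inversionParity hM (t * w) t = 1 := by
    rw [inversionParity_mul, cs.inversionParity_self hM ht, ht.inv, ht.mul_self, one_mul,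
      (by decide : ∀ a : ZMod 2, a ≠ 1 → a = 0) _ hne, add_zero]
  have h2 := (cs.isLeftInversion_of_inversionParity_eq_one hM h1).2
  rw [← mul_assoc, ht.mul_self, one_mul] at h2
  omega

theorem isLeftInversion_simple_mul_conj_iff {i : B} {w t : W} (ht : t ≠ s i) :
    cs.IsLeftInversion (s i * w) (s i * t * s i) ↔ cs.IsLeftInversion w t := by
  simp only [cs.isLeftInversion_iff_inversionParity_eq_one hM]
  conv_rhs => rw [← cs.simple_mul_simple_cancel_left (w := w) i, inversionParity_mul,
    inversionParity_simple, if_neg ht, zero_add, inv_simple]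

end ReflectionCocycle

section RightAngled

variable (hM : M.IsRightAngled)
include hM

theorem wordProd_alternatingWord_ne {i j : B} (hij : i ≠ j) (h0 : M i j = 0) {n : ℕ}
    (hn : n ≠ 0) :
    π (alternatingWord i j n) ≠ π (alternatingWord j i n) := by
  classical
  intro h
  have h' := congrArg (cs.lift ⟨_, hM.isLiftable_dihedral hij h0⟩) h
  rcases Nat.even_or_odd' n with ⟨k, rfl | rfl⟩
  · simp only [prod_alternatingWord_eq_mul_pow, even_two, Even.mul_right, ↓reduceIte,
      mul_div_cancel_left₀ _ two_ne_zero, one_mul, map_pow, map_mul, lift_apply_simple, hij.symm,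
      DihedralGroup.sr_mul_sr, sub_zero, DihedralGroup.r_pow, zero_sub, neg_mul,
      DihedralGroup.r.injEq] at h'
    have : (k : ℤ) = -k := h'
    omega
  · simp only [prod_alternatingWord_eq_mul_pow, Nat.not_even_bit1, ↓reduceIte, map_mul,
      lift_apply_simple, hij.symm, map_pow, DihedralGroup.sr_mul_sr, sub_zero, DihedralGroup.r_pow,
      one_mul, DihedralGroup.sr_mul_r, zero_sub, neg_mul, zero_add, DihedralGroup.sr.injEq] at h'
    have : (1 + ((2 * k + 1) / 2 : ℕ) : ℤ) = -((2 * k + 1) / 2 : ℕ) := h'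
    omega

theorem length_alternatingWord_mul_lt {i j : B} (hij : i ≠ j) (h0 : M i j = 0) {w : W}
    (hi : cs.IsLeftDescent w i) (m : ℕ) :
    ℓ (π (alternatingWord j i (m + 1)) * w) < ℓ (π (alternatingWord i j m) * w) := by
  induction m with
  | zero => simpa [alternatingWord, IsLeftDescent] using hi
  | succ m ih =>
    set x := if Even m then j else i
    set p := π (alternatingWord i j m)
    set q := π (alternatingWord j i (m + 1))
    have hq : q = p * s i := by simp [q, p, alternatingWord_succ, wordProd_append]
    have hp' : π (alternatingWord i j (m + 1)) = s x * p := by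
      rw [alternatingWord_succ', wordProd_cons]
    have hq' : π (alternatingWord j i (m + 1 + 1)) = s x * q := by
      simp only [alternatingWord_succ' j i (m + 1), wordProd_cons, Nat.even_add_one, ite_not, x, q]
    -- the reflection `q * p⁻¹ = p * s i * p⁻¹` stays a left inversion along the chain
    have hinv : cs.IsLeftInversion (p * w) (q * p⁻¹) :=
      ⟨⟨p, i, by rw [hq]⟩, by simpa [mul_assoc] using ih⟩
    have hne : q * p⁻¹ ≠ s x := by
      intro h
      refine cs.wordProd_alternatingWord_ne hM hij h0 (Nat.succ_ne_zero m) ?_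
      rw [hp', ← h, inv_mul_cancel_right]
    have := ((cs.isLeftInversion_simple_mul_conj_iff hM hne).2 hinv).2
    have e : s x * (q * p⁻¹) * s x * (s x * (p * w)) = s x * q * w := by simp [mul_assoc]
    rwa [e, ← hq', ← mul_assoc, ← hp'] at this

theorem commute_simple_of_isLeftDescent {w : W} {i j : B} (hi : cs.IsLeftDescent w i)
    (hj : cs.IsLeftDescent w j) : Commute (s i) (s j) := by
  rcases eq_or_ne i j with rfl | hij
  · exact Commute.refl _
  rcases hM i j hij with h0 | h2
  · exfalso
    -- the two alternating chains from `w` would both descend forever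
    have hdesc : ∀ m, ℓ (π (alternatingWord i j m) * w) + ℓ (π (alternatingWord j i m) * w)
        + 2 * m ≤ 2 * ℓ w := by
      intro m
      induction m with
      | zero => simp [alternatingWord, two_mul]
      | succ m ih =>
        have h1 := cs.length_alternatingWord_mul_lt hM hij h0 hi m
        have h2 := cs.length_alternatingWord_mul_lt hM hij.symm (M.symmetric i j ▸ h0) hj m
        omega
    have := hdesc (ℓ w + 1)
    omega
  · exact cs.commute_simple_of_eq_two h2

theorem isLeftDescent_of_simple_mul {i k : B} {w : W} (hcomm : Commute (s i) (s k))
    (hne : s k ≠ s i) (h : cs.IsLeftDescent (s i * w) k) : cs.IsLeftDescent w k := by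
  rw [← isLeftInversion_simple_iff_isLeftDescent] at h ⊢
  have := (cs.isLeftInversion_simple_mul_conj_iff hM hne).2 h
  rwa [simple_mul_simple_cancel_left, hcomm.eq, mul_assoc, simple_mul_simple_self, mul_one] at this

theorem not_isLeftDescent_both_simple_mul {b c : W} {i : B} (hi : cs.IsLeftDescent b i)
    (h : ∀ k, ¬(cs.IsLeftDescent b k ∧ cs.IsLeftDescent c k)) (k : B) :
    ¬(cs.IsLeftDescent (s i * b) k ∧ cs.IsLeftDescent (s i * c) k) := by
  rintro ⟨hkb, hkc⟩
  have hne : s k ≠ s i := by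
    intro e
    rw [IsLeftDescent, e] at hkb
    exact cs.isLeftDescent_iff_not_isLeftDescent_mul.mp hi hkb
  have hic : cs.IsLeftDescent (s i * c) i := by
    by_contra hic
    exact h i ⟨hi, cs.isLeftDescent_iff_not_isLeftDescent_mul.mpr hic⟩
  have hcomm := cs.commute_simple_of_isLeftDescent hM hic hkc
  exact h k ⟨cs.isLeftDescent_of_simple_mul hM hcomm hne hkb,
    cs.isLeftDescent_of_simple_mul hM hcomm hne hkc⟩

theorem length_inv_mul_eq_add_of_not_isLeftDescent_both {b c : W}
    (h : ∀ k, ¬(cs.IsLeftDescent b k ∧ cs.IsLeftDescent c k)) :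
    ℓ (b⁻¹ * c) = ℓ b + ℓ c := by
  induction hn : ℓ b generalizing b c with
  | zero => simp [cs.length_eq_zero_iff.mp hn]
  | succ n ih =>
    obtain ⟨i, hi⟩ := cs.exists_leftDescent_of_ne_one (w := b) (by rintro rfl; simp at hn)
    have hb := cs.isLeftDescent_iff.mp hi
    have hc := cs.not_isLeftDescent_iff.mp fun hc => h i ⟨hi, hc⟩
    have := ih (cs.not_isLeftDescent_both_simple_mul hM hi h) (by omega)
    rw [mul_inv_rev, inv_simple, mul_assoc, simple_mul_simple_cancel_left] at this
    omega

end RightAngled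

def IsBetween (a d b : W) : Prop := ℓ (a⁻¹ * d) + ℓ (d⁻¹ * b) = ℓ (a⁻¹ * b)

theorem isBetween_mul_left (g a d b : W) :
    cs.IsBetween (g * a) (g * d) (g * b) ↔ cs.IsBetween a d b := by
  simp [IsBetween, mul_assoc]

variable {cs} in
theorem IsBetween.simple_mul_of_not_isLeftDescent {m b : W} {k : B} (h : cs.IsBetween 1 m b)
    (hk : ¬cs.IsLeftDescent b k) : cs.IsBetween 1 (s k * m) (s k * b) := by
  simp only [IsBetween, inv_one, one_mul] at h ⊢
  have hb := cs.not_isLeftDescent_iff.mp hk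
  have hm : ℓ (s k * m) = ℓ m + 1 := by
    refine (cs.length_simple_mul m k).resolve_right fun hm => ?_
    have := cs.length_mul_le (s k * m) (m⁻¹ * b)
    rw [mul_assoc, mul_inv_cancel_left] at this
    omega
  rw [mul_inv_rev, inv_simple, mul_assoc, simple_mul_simple_cancel_left]
  omega

theorem exists_isBetween_one (hM : M.IsRightAngled) (b c : W) :
    ∃ m, cs.IsBetween 1 m b ∧ cs.IsBetween 1 m c ∧ cs.IsBetween b m c := by
  induction hn : ℓ b using Nat.strong_induction_on generalizing b c with
  | _ n ih =>
    by_cases hcommon : ∃ k, cs.IsLeftDescent b k ∧ cs.IsLeftDescent c k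
    · obtain ⟨k, hkb, hkc⟩ := hcommon
      obtain ⟨m, hmb, hmc, hbmc⟩ := ih _ (hn ▸ hkb) (s k * b) (s k * c) rfl
      refine ⟨s k * m, ?_, ?_, ?_⟩
      · simpa using hmb.simple_mul_of_not_isLeftDescent
          (cs.isLeftDescent_iff_not_isLeftDescent_mul.mp hkb)
      · simpa using hmc.simple_mul_of_not_isLeftDescent
          (cs.isLeftDescent_iff_not_isLeftDescent_mul.mp hkc)
      · simpa using (cs.isBetween_mul_left (s k) _ _ _).2 hbmc
    · refine ⟨1, by simp [IsBetween], by simp [IsBetween], ?_⟩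
      rw [IsBetween, mul_one, inv_one, one_mul, length_inv,
        cs.length_inv_mul_eq_add_of_not_isLeftDescent_both hM fun k hk => hcommon ⟨k, hk⟩]

end CoxeterSystem

/-- In a right-angled Coxeter group with word metric
`d γ β = ℓ (γ⁻¹ * β)`, any three elements span a tripod: there is a `δ`
lying between each pair of them. -/
theorem racg_tripod
    {B : Type*} {W : Type*} [Group W] {M : CoxeterMatrix B}
    (cs : CoxeterSystem M W)
    (hra : ∀ s t : B, s ≠ t → M s t = 0 ∨ M s t = 2)
    (α β γ : W) :
    ∃ δ : W,
      cs.length (α⁻¹ * δ) + cs.length (δ⁻¹ * β) = cs.length (α⁻¹ * β) ∧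
      cs.length (α⁻¹ * δ) + cs.length (δ⁻¹ * γ) = cs.length (α⁻¹ * γ) ∧
      cs.length (β⁻¹ * δ) + cs.length (δ⁻¹ * γ) = cs.length (β⁻¹ * γ) := by
  obtain ⟨m, hβ, hγ, hβγ⟩ := cs.exists_isBetween_one hra (α⁻¹ * β) (α⁻¹ * γ)
  rw [← cs.isBetween_mul_left α] at hβ hγ hβγ
  simp only [mul_one, mul_inv_cancel_left] at hβ hγ hβγ
  exact ⟨α * m, hβ, hγ, hβγ⟩
end

section
/- If along a geodesic path α_{i-1}, α_i, α_{i+1} in the Cayley graph of a right-angled Coxeter group the word lengths satisfy ℓ(α_{i-1}) < ℓ(α_i) > ℓ(α_{i+1}), then there exist commuting generators s, t and an element α_i' with ℓ(α_i') = ℓ(α_i) - 2 such that α_{i-1} = α_i' s, α_{i+1} = α_i' t, and α_{i-1}, α_i', α_{i+1} is again a geodesic path. -/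
/-!
The exchange property for right-angled Coxeter groups comes from Tits' sign representation:
`s i` acts on `W × ℤˣ` by `(t, ε) ↦ (s i * t * s i, ±ε)`, flipping the sign exactly when
`t = s i`, so the parity of the number of occurrences of `t` in the right inversion sequence of
a word depends only on the element the word represents.

At the local maximum, `α₁` has two distinct right descents `s i, s j`. If `M i j = 0`, repeated
exchanges produce words for `α₁` of length `ℓ α₁` ending in arbitrarily long alternating words
in `i, j` (the exchanged reflection never comes from the alternating tail, as its image in the
infinite dihedral group shows), which is absurd. Hence `s i, s j` commute. One more exchange in a
reduced word for `α₁` ending in `j` deletes a letter other than the last, so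
`ℓ (α₁ * s i * s j) = ℓ α₁ - 2`, and `α' = α₁ * s i * s j` is the required vertex.
-/

open List

def CoxeterMatrix.IsRightAngled_s4 {B : Type*} (M : CoxeterMatrix B) : Prop :=
  ∀ i j, i ≠ j → M i j = 0 ∨ M i j = 2

theorem CoxeterMatrix.IsRightAngled_s4.isLiftable {B G : Type*} [Monoid G] {M : CoxeterMatrix B}
    (hM : M.IsRightAngled_s4) {f : B → G} (hsq : ∀ i, f i * f i = 1)
    (hcomm : ∀ i j, M i j = 2 → f i * f j = f j * f i) : M.IsLiftable f := by
  intro i j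
  rcases eq_or_ne i j with rfl | hij
  · rw [M.diagonal, pow_one, hsq]
  rcases hM i j hij with h | h
  · rw [h, pow_zero]
  · rw [h, sq, mul_assoc, ← mul_assoc (f j), ← hcomm i j h, mul_assoc, hsq, mul_one, hsq]

theorem Equiv.subLeft_mul_self {G : Type*} [AddCommGroup G] (a : G) :
    Equiv.subLeft a * Equiv.subLeft a = 1 := by
  ext z
  simp

theorem Equiv.conj_subLeft {G : Type*} [AddCommGroup G] (a c : G) :
    MulAut.conj (Equiv.subLeft a) (Equiv.subLeft c) = Equiv.subLeft (a + a - c) := by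
  rw [MulAut.conj_apply, inv_eq_of_mul_eq_one_right (Equiv.subLeft_mul_self a)]
  ext z
  simp only [Equiv.Perm.mul_apply, Equiv.subLeft_apply]
  abel

namespace CoxeterSystem

variable {B W : Type*} [Group W] {M : CoxeterMatrix B} (cs : CoxeterSystem M W)

local prefix:100 "s " => cs.simple
local prefix:100 "π " => cs.wordProd
local prefix:100 "ℓ " => cs.length
local prefix:100 "ris " => cs.rightInvSeq

theorem simple_mul_simple_comm_of_eq_two {i j : B} (h : M i j = 2) :
    s i * s j = s j * s i := by
  have h' := cs.simple_mul_simple_pow i j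
  rw [h, sq] at h'
  rw [mul_eq_one_iff_eq_inv.mp h', mul_inv_rev, inv_simple, inv_simple]

theorem simple_mul_mul_simple_eq_simple_iff {i j : B} (h : s i * s j = s j * s i) {w : W} :
    s i * w * s i = s j ↔ w = s j := by
  constructor
  · intro hw
    calc w = s i * (s i * w * s i) * s i := by simp [mul_assoc]
      _ = s j := by rw [hw, h, simple_mul_simple_cancel_right]
  · rintro rfl
    rw [h, simple_mul_simple_cancel_right]

theorem rightInvSeq_append (x y : List B) :
    ris (x ++ y) = (ris x).map (fun u => (π y)⁻¹ * u * π y) ++ ris y := by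
  induction x with
  | nil => simp
  | cons c x ih => simp [rightInvSeq, ih, wordProd_append, mul_assoc]

theorem mem_rightInvSeq_append_cases {x y : List B} {t : W} (h : t ∈ ris (x ++ y)) :
    t ∈ ris y ∨ ∃ k < x.length, π (x ++ y) * t = π (x.eraseIdx k ++ y) := by
  rw [rightInvSeq_append, mem_append, mem_map] at h
  rcases h with ⟨u, hu, rfl⟩ | h
  · right
    obtain ⟨k, hk, rfl⟩ := mem_iff_getElem.mp hu
    refine ⟨k, by simpa using hk, ?_⟩
    have hdel := cs.wordProd_mul_getD_rightInvSeq x k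
    rw [getD_eq_getElem _ _ hk] at hdel
    rw [wordProd_append, wordProd_append, ← hdel]
    group
  · exact Or.inl h

section SignRepresentation

variable [DecidableEq W]

def signFlip (i : B) (p : W × ℤˣ) : W × ℤˣ :=
  (s i * p.1 * s i, (if p.1 = s i then -1 else 1) * p.2)

theorem signFlip_comm {i j : B} (h : s i * s j = s j * s i) (p : W × ℤˣ) :
    cs.signFlip i (cs.signFlip j p) = cs.signFlip j (cs.signFlip i p) := by
  obtain ⟨w, ε⟩ := p
  simp only [signFlip, simple_mul_mul_simple_eq_simple_iff cs h,
    simple_mul_mul_simple_eq_simple_iff cs h.symm, Prod.mk.injEq]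
  constructor
  · rw [show s i * (s j * w * s j) * s i = s i * s j * w * (s j * s i) by group,
      show s j * (s i * w * s i) * s j = s j * s i * w * (s i * s j) by group, h]
  · exact mul_left_comm _ _ _

theorem signFlip_involutive (i : B) : Function.Involutive (cs.signFlip i) := by
  rintro ⟨w, ε⟩
  simp only [signFlip, simple_mul_mul_simple_eq_simple_iff cs rfl, Prod.mk.injEq]
  refine ⟨by simp [mul_assoc], ?_⟩
  split_ifs <;> simp

def signPerm (i : B) : Equiv.Perm (W × ℤˣ) := (cs.signFlip_involutive i).toPerm

def signRep (hM : M.IsRightAngled_s4) : W →* Equiv.Perm (W × ℤˣ) :=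
  cs.lift ⟨cs.signPerm, hM.isLiftable
    (fun i => Equiv.ext fun p => cs.signFlip_involutive i p)
    (fun _ _ h => Equiv.ext fun p => cs.signFlip_comm (cs.simple_mul_simple_comm_of_eq_two h) p)⟩

theorem signRep_wordProd (hM : M.IsRightAngled_s4) (ω : List B) (t : W) (ε : ℤˣ) :
    cs.signRep hM (π ω) (t, ε) = (π ω * t * (π ω)⁻¹, (-1) ^ (ris ω).count t * ε) := by
  induction ω with
  | nil => simp
  | cons c ω ih =>
    have hconj : (π ω)⁻¹ * s c * π ω = t ↔ π ω * t * (π ω)⁻¹ = s c := by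
      constructor <;> intro h <;> rw [← h] <;> group
    rw [wordProd_cons, map_mul, Equiv.Perm.mul_apply, ih]
    simp only [signRep, lift_apply_simple, signPerm, Function.Involutive.coe_toPerm, signFlip,
      rightInvSeq, count_cons, beq_iff_eq, hconj, Prod.mk.injEq, mul_inv_rev, inv_simple]
    refine ⟨by group, ?_⟩
    split_ifs <;> simp [pow_succ, mul_comm]

theorem neg_one_pow_count_rightInvSeq_eq (hM : M.IsRightAngled_s4) {ω τ : List B}
    (h : π ω = π τ) (t : W) :
    (-1 : ℤˣ) ^ (ris ω).count t = (-1) ^ (ris τ).count t := by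
  have := congrArg (fun g => (g (t, 1)).2) (congrArg (cs.signRep hM) h)
  simpa [signRep_wordProd] using this

end SignRepresentation

theorem simple_mem_rightInvSeq_of_isRightDescent (hM : M.IsRightAngled_s4) {ω : List B} {i : B}
    (h : cs.IsRightDescent (π ω) i) : s i ∈ ris ω := by
  classical
  obtain ⟨σ, hσ, hσω⟩ := cs.exists_isReduced (π ω * s i)
  have hτω : π (σ.concat i) = π ω := by
    rw [wordProd_concat, ← hσω, simple_mul_simple_cancel_right]
  have hτ : cs.IsReduced (σ.concat i) := by
    have := cs.length_mul_simple (π ω) i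
    unfold IsReduced IsRightDescent at *
    rw [hτω, length_concat, ← hσ, ← hσω]
    omega
  have hcount : (ris (σ.concat i)).count (s i) = 1 :=
    count_eq_one_of_mem hτ.nodup_rightInvSeq <| by
      rw [rightInvSeq_concat, concat_eq_append]
      exact mem_concat_self
  have hsign := cs.neg_one_pow_count_rightInvSeq_eq hM hτω.symm (s i)
  rw [hcount, pow_one] at hsign
  rw [← count_pos_iff, Nat.pos_iff_ne_zero]
  intro h0
  rw [h0, pow_zero] at hsign
  exact absurd hsign (by decide)

/-- `s a` and `s b` go to the reflections of `ℤ` in `0` and `1 / 2`, which generate an infinite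
dihedral group. -/
def dihedralGen [DecidableEq B] (a b k : B) : Equiv.Perm ℤ :=
  if k = a then Equiv.subLeft 0 else if k = b then Equiv.subLeft 1 else 1

def toDihedral [DecidableEq B] (hM : M.IsRightAngled_s4) {a b : B} (hab : M a b = 0) :
    W →* Equiv.Perm ℤ :=
  cs.lift ⟨dihedralGen a b, hM.isLiftable
    (fun _ => by unfold dihedralGen; split_ifs <;> simp [Equiv.subLeft_mul_self])
    (fun _ _ _ => by unfold dihedralGen; split_ifs <;> simp_all [M.symmetric])⟩

theorem toDihedral_rightInvSeq_alternatingWord [DecidableEq B] (hM : M.IsRightAngled_s4) {a b : B}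
    (hab : M a b = 0) (m : ℕ) :
    (∀ t ∈ ris (alternatingWord a b m), ∃ c : ℤ, 0 < c ∧ cs.toDihedral hM hab t = .subLeft c) ∧
      (∀ t ∈ ris (alternatingWord b a m), ∃ c : ℤ, c ≤ 0 ∧
        cs.toDihedral hM hab t = .subLeft c) := by
  have hne : b ≠ a := by
    rintro rfl
    simp at hab
  have ha : cs.toDihedral hM hab (s a) = .subLeft 0 := by
    simp [toDihedral, dihedralGen]
  have hb : cs.toDihedral hM hab (s b) = .subLeft 1 := by
    simp [toDihedral, dihedralGen, hne]
  have hconj : ∀ k u, cs.toDihedral hM hab (MulAut.conj (s k) u) =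
      MulAut.conj (cs.toDihedral hM hab (s k)) (cs.toDihedral hM hab u) := by
    intro k u
    simp only [MulAut.conj_apply, map_mul, map_inv]
  induction m with
  | zero => simp [alternatingWord]
  | succ m ih =>
    rw [alternatingWord_succ, alternatingWord_succ, rightInvSeq_concat, rightInvSeq_concat]
    simp only [concat_eq_append, mem_append, mem_map, mem_singleton]
    constructor
    · rintro t (⟨u, hu, rfl⟩ | rfl)
      · obtain ⟨c, hc, hu⟩ := ih.2 u hu
        exact ⟨1 + 1 - c, by omega, by rw [hconj, hb, hu, Equiv.conj_subLeft]⟩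
      · exact ⟨1, one_pos, hb⟩
    · rintro t (⟨u, hu, rfl⟩ | rfl)
      · obtain ⟨c, hc, hu⟩ := ih.1 u hu
        exact ⟨0 + 0 - c, by omega, by rw [hconj, ha, hu, Equiv.conj_subLeft]⟩
      · exact ⟨0, le_rfl, ha⟩

theorem simple_not_mem_rightInvSeq_alternatingWord (hM : M.IsRightAngled_s4) {a b : B}
    (hab : M a b = 0) (m : ℕ) : s a ∉ ris (alternatingWord a b m) := by
  classical
  intro h
  obtain ⟨c, hc, hψ⟩ := (cs.toDihedral_rightInvSeq_alternatingWord hM hab m).1 _ h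
  have h0 := congrArg (· 0) hψ
  simp [toDihedral, dihedralGen] at h0
  omega

theorem exists_wordProd_append_alternatingWord_succ (hM : M.IsRightAngled_s4) {a b : B}
    (hab : M a b = 0) {x : List B} {m : ℕ}
    (ha : cs.IsRightDescent (π (x ++ alternatingWord a b m)) a) :
    ∃ x' : List B, π (x' ++ alternatingWord b a (m + 1)) = π (x ++ alternatingWord a b m) ∧
      x'.length + 1 = x.length := by
  rcases cs.mem_rightInvSeq_append_cases (cs.simple_mem_rightInvSeq_of_isRightDescent hM ha) with
    h | ⟨k, hk, hdel⟩
  · exact absurd h (cs.simple_not_mem_rightInvSeq_alternatingWord hM hab m)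
  · refine ⟨x.eraseIdx k, ?_, by rw [length_eraseIdx_of_lt hk]; omega⟩
    rw [alternatingWord_succ, concat_eq_append, ← append_assoc, wordProd_append, ← hdel,
      wordProd_singleton, simple_mul_simple_cancel_right]

theorem exists_wordProd_append_alternatingWord (hM : M.IsRightAngled_s4) {i j : B} (hij : M i j = 0)
    {w : W} (hi : cs.IsRightDescent w i) (hj : cs.IsRightDescent w j) (m : ℕ) :
    ∃ x : List B, (π (x ++ alternatingWord i j m) = w ∨ π (x ++ alternatingWord j i m) = w) ∧
      x.length + m = ℓ w := by
  induction m with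
  | zero =>
    obtain ⟨x, hx, rfl⟩ := cs.exists_isReduced w
    exact ⟨x, Or.inl (by simp [alternatingWord]), Eq.symm hx⟩
  | succ m ih =>
    obtain ⟨x, hw | hw, hlen⟩ := ih
    · obtain ⟨x', hx', hlen'⟩ :=
        cs.exists_wordProd_append_alternatingWord_succ hM hij (a := i) (hw ▸ hi)
      exact ⟨x', Or.inr (hx'.trans hw), by omega⟩
    · obtain ⟨x', hx', hlen'⟩ := cs.exists_wordProd_append_alternatingWord_succ hM
        (by rwa [M.symmetric]) (a := j) (hw ▸ hj)
      exact ⟨x', Or.inl (hx'.trans hw), by omega⟩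

theorem coxeterMatrix_ne_zero_of_isRightDescent (hM : M.IsRightAngled_s4) {w : W} {i j : B}
    (hi : cs.IsRightDescent w i) (hj : cs.IsRightDescent w j) : M i j ≠ 0 := fun hij => by
  obtain ⟨x, -, hx⟩ := cs.exists_wordProd_append_alternatingWord hM hij hi hj (ℓ w + 1)
  omega

theorem length_mul_simple_mul_simple_add_two (hM : M.IsRightAngled_s4) {w : W} {i j : B}
    (hi : cs.IsRightDescent w i) (hj : cs.IsRightDescent w j) (hij : s i ≠ s j) :
    ℓ (w * s i * s j) + 2 = ℓ w := by
  obtain ⟨σ, hσ, hσw⟩ := cs.exists_isReduced (w * s j)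
  have hw : π (σ ++ [j]) = w := by
    rw [wordProd_append, wordProd_singleton, ← hσw, simple_mul_simple_cancel_right]
  have hmem := cs.simple_mem_rightInvSeq_of_isRightDescent hM (hw ▸ hi)
  rcases cs.mem_rightInvSeq_append_cases hmem with hlast | ⟨k, hk, hdel⟩
  · simp [rightInvSeq, hij] at hlast
  · have hws : w * s i * s j = π (σ.eraseIdx k) := by
      rw [← hw, hdel, wordProd_append, wordProd_singleton, simple_mul_simple_cancel_right]
    have hub := cs.length_wordProd_le (σ.eraseIdx k)
    rw [length_eraseIdx_of_lt hk, ← hσ, ← hσw, ← hws] at hub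
    unfold IsRightDescent at hi hj
    have := cs.length_mul_simple w i
    have := cs.length_mul_simple w j
    have := cs.length_mul_simple (w * s i) j
    omega

end CoxeterSystem

open CoxeterSystem in
/-- If along a geodesic path `α₀, α₁, α₂` in the Cayley graph of
a right-angled Coxeter group the word lengths satisfy `ℓ α₀ < ℓ α₁ > ℓ α₂`, then
there are commuting generators `s, t` and an element `α'` with
`ℓ α' = ℓ α₁ - 2`, `α₀ = α' * s`, `α₂ = α' * t`, and `α₀, α', α₂` is again a
geodesic path. Here `d γ β = ℓ (γ⁻¹ * β)` is the word metric. -/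
theorem racg_remove_local_maximum
    {B : Type*} {W : Type*} [Group W] {M : CoxeterMatrix B}
    (cs : CoxeterSystem M W)
    (hra : ∀ s t : B, s ≠ t → M s t = 0 ∨ M s t = 2)
    (α₀ α₁ α₂ : W)
    (h01 : cs.length (α₀⁻¹ * α₁) = 1) (h12 : cs.length (α₁⁻¹ * α₂) = 1)
    (h02 : cs.length (α₀⁻¹ * α₂) = 2)
    (hup : cs.length α₀ < cs.length α₁) (hdown : cs.length α₂ < cs.length α₁) :
    ∃ (s t : B) (α' : W),
      M s t = 2 ∧
      cs.simple s * cs.simple t = cs.simple t * cs.simple s ∧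
      cs.length α' = cs.length α₁ - 2 ∧
      α₀ = α' * cs.simple s ∧ α₂ = α' * cs.simple t ∧
      cs.length (α₀⁻¹ * α') = 1 ∧ cs.length (α'⁻¹ * α₂) = 1 := by
  obtain ⟨i, hi⟩ := cs.length_eq_one_iff.mp h01
  obtain ⟨j, hj⟩ := cs.length_eq_one_iff.mp h12
  have hα₀ : α₀ = α₁ * cs.simple i := by rw [← inv_simple, ← hi]; group
  have hα₂ : α₂ = α₁ * cs.simple j := by rw [← hj]; group
  have hne : cs.simple i ≠ cs.simple j := fun h => by simp [hα₀, hα₂, h] at h02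
  have hdi : cs.IsRightDescent α₁ i := by rwa [IsRightDescent, ← hα₀]
  have hdj : cs.IsRightDescent α₁ j := by rwa [IsRightDescent, ← hα₂]
  have hM : M i j = 2 := (hra i j (by rintro rfl; exact hne rfl)).resolve_left
    (cs.coxeterMatrix_ne_zero_of_isRightDescent hra hdi hdj)
  have hcomm := cs.simple_mul_simple_comm_of_eq_two hM
  have hlen := cs.length_mul_simple_mul_simple_add_two hra hdi hdj hne
  have hα₀' : α₀ = α₁ * cs.simple i * cs.simple j * cs.simple j := by
    rw [hα₀, simple_mul_simple_cancel_right]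
  have hα₂' : α₂ = α₁ * cs.simple i * cs.simple j * cs.simple i := by
    rw [hα₂, mul_assoc α₁, hcomm, ← mul_assoc, simple_mul_simple_cancel_right]
  generalize α₁ * cs.simple i * cs.simple j = α' at hlen hα₀' hα₂'
  refine ⟨j, i, α', by rwa [M.symmetric], hcomm.symm, by omega, hα₀', hα₂', ?_, ?_⟩
  · simp [hα₀']
  · simp [hα₂']
end

section
/- The Morse–Thue sequence is cube-free: it contains no subword of the form WWW for any nonempty finite word W in {0,1}. -/
/-- The Morse–Thue sequence: `morseThue n` is the parity of the number of `1`s in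
the binary representation of `n` (`false ↔ 0`, `true ↔ 1`). This is the fixed
point starting at `0` of the substitution `0 → 01`, `1 → 10`. -/
def morseThue (n : ℕ) : Bool := (Nat.digits 2 n).count 1 % 2 = 1
lemma mt_even (n : ℕ) : morseThue (2*n) = morseThue n := by
  rcases Nat.eq_zero_or_pos n with h|h
  · subst h; rfl
  · unfold morseThue
    rw [Nat.digits_def' (by norm_num : (1:ℕ) < 2) (by omega)]
    simp [Nat.mul_mod_right, Nat.mul_div_cancel_left]
lemma mt_odd (n : ℕ) : morseThue (2*n+1) = ! morseThue n := by
  unfold morseThue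
  rw [Nat.digits_def' (by norm_num : (1:ℕ) < 2) (by omega)]
  have h1 : (2*n+1) % 2 = 1 := by omega
  have h2 : (2*n+1) / 2 = n := by omega
  rw [h1, h2]
  simp only [List.count_cons, if_pos rfl]
  rcases Nat.mod_two_eq_zero_or_one ((Nat.digits 2 n).count 1) with hc | hc <;>
    simp [Nat.add_mod, hc]

lemma mt_ne (a : ℕ) : morseThue (2*a) ≠ morseThue (2*a+1) := by
  rw [mt_even, mt_odd]
  cases morseThue a <;> simp

lemma no3 (j : ℕ) (h1 : morseThue j = morseThue (j+1))
    (h2 : morseThue (j+1) = morseThue (j+2)) : False := by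
  rcases Nat.even_or_odd j with ⟨a, ha⟩ | ⟨a, ha⟩
  · have e1 : j = 2*a := by omega
    have e2 : j+1 = 2*a+1 := by omega
    rw [e1] at h1
    exact mt_ne a h1
  · have e1 : j+1 = 2*(a+1) := by omega
    have e2 : j+2 = 2*(a+1)+1 := by omega
    rw [e2] at h2; rw [e1] at h2
    exact mt_ne (a+1) h2

lemma noRep : ∀ n, 1 ≤ n → ∀ i,
    ¬ ∀ k < 2*n, morseThue (i+k) = morseThue (i+k+n) := by
  intro n
  induction n using Nat.strong_induction_on with
  | _ n IH =>
    intro hn i h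
    rcases Nat.even_or_odd n with ⟨m, hm⟩ | ⟨q, hq⟩
    · -- even case
      have hm1 : 1 ≤ m := by omega
      apply IH m (by omega) hm1 ((i+1)/2)
      intro a ha
      set i' := (i+1)/2 with hi'
      have h2i : i ≤ 2*i' ∧ 2*i' ≤ i+1 := by omega
      have hk : 2*(i'+a) - i < 2*n := by omega
      have hh := h (2*(i'+a) - i) hk
      have e1 : i + (2*(i'+a) - i) = 2*(i'+a) := by omega
      rw [e1] at hh
      have e2 : 2*(i'+a) + n = 2*(i'+a+m) := by omega
      rw [e2, mt_even, mt_even] at hh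
      exact hh
    · -- odd case, n = 2*q+1
      rcases Nat.lt_or_ge n 3 with h3 | h3
      · have hn1 : n = 1 := by omega
        subst hn1
        have h0 := h 0 (by omega)
        have h1 := h 1 (by omega)
        simp only [Nat.add_zero] at h0
        have e : i + 1 + 1 = i + 2 := by omega
        rw [e] at h1
        exact no3 i h0 h1
      · have step : ∀ a b, 2*b+1 = 2*a+n →
            morseThue (2*a) = morseThue (2*a+n) →
            morseThue (2*a+1) = morseThue (2*a+1+n) →
            morseThue b = morseThue (b+1) := by
          intro a b hab ha1 ha2
          have e1 : 2*a+n = 2*b+1 := by omega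
          have e2 : 2*a+1+n = 2*(b+1) := by omega
          rw [e1, mt_even, mt_odd] at ha1
          rw [e2, mt_odd, mt_even] at ha2
          cases hb : morseThue b <;> rw [hb] at ha1 <;> simp_all
        set a0 := (i+1)/2 with ha0
        have h2i : i ≤ 2*a0 ∧ 2*a0 ≤ i+1 := by omega
        set b0 := a0 + q with hb0
        have get : ∀ k, k < 2*n → i ≤ k + i →
            morseThue (k + i) = morseThue (k + i + n) := by
          intro k hk' _
          have := h k hk'
          have e : k + i = i + k := by omega
          rw [e]; exact this
        have hb1 : morseThue b0 = morseThue (b0+1) := by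
          apply step a0 b0 (by omega)
          · have := h (2*a0 - i) (by omega)
            have e : i + (2*a0 - i) = 2*a0 := by omega
            rwa [e] at this
          · have := h (2*a0 + 1 - i) (by omega)
            have e : i + (2*a0 + 1 - i) = 2*a0+1 := by omega
            rwa [e] at this
        have hb2 : morseThue (b0+1) = morseThue (b0+1+1) := by
          apply step (a0+1) (b0+1) (by omega)
          · have := h (2*(a0+1) - i) (by omega)
            have e : i + (2*(a0+1) - i) = 2*(a0+1) := by omega
            rwa [e] at this
          · have := h (2*(a0+1) + 1 - i) (by omega)
            have e : i + (2*(a0+1) + 1 - i) = 2*(a0+1)+1 := by omega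
            rwa [e] at this
        have e : b0+1+1 = b0+2 := by omega
        rw [e] at hb2
        exact no3 b0 hb1 hb2

/-- The Morse–Thue sequence is cube-free: it contains no
subword of the form `WWW` for a nonempty finite word `W` in `{0,1}`. -/
theorem morseThue_cubefree (i : ℕ) (w : List Bool) (hw : w ≠ []) :
    ¬ (∀ j < 3 * w.length, morseThue (i + j) = w.getD (j % w.length) false) := by
  intro H
  set n := w.length with hn
  have hn1 : 1 ≤ n := List.length_pos_iff.mpr hw
  apply noRep n hn1 i
  intro k hk
  have h1 := H k (by omega)
  have h2 := H (k + n) (by omega)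
  rw [Nat.add_mod_right] at h2
  have e : i + (k + n) = i + k + n := by omega
  rw [e] at h2
  exact h1.trans h2.symm
end

section
/- Let Γ be a hyperbolic (no-square) 2-colored right-angled Coxeter group with S = A ⊔ B, and U, V canonical a-representations with UV reduced, notation as before. Then at most one letter u ∈ U_R is moved by the canonical reduction map of UV to the right of a_{p+2}. -/
/-!
A letter `u` of `U` that `φ` moves past `a_{p+2}` is moved past `a_{p+1}` as well, so it
commutes with both, and it is a `b`-letter (distinct letters of one color never commute).
If `a_{p+1} = a_{p+2}`, reducedness of `UV` puts a letter not commuting with them in between;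
it is a `b`-letter, so `u` cannot pass it, nor can it pass `a_{p+2}`. Otherwise `a_{p+1}` and
`a_{p+2}` do not commute. Two such letters `u, u'` either differ, and then do not commute, or
are equal, and then reducedness gives a letter between them not commuting with `u`, which is
dragged past `a_{p+2}` too. Either way we get two non-commuting letters commuting with both
`a_{p+1}` and `a_{p+2}`: a square.
-/

/-- A word is a *left a-representation* with respect to the 2-coloring
`c : B → Bool` if every letter of color `a` (`c = true`) immediately preceded
by a letter of color `b` (`c = false`) does not commute with it. -/
def IsLeftARep {B : Type*} (M : CoxeterMatrix B) (c : B → Bool) (w : List B) : Prop :=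
  ∀ (l : List B) (x y : B) (r : List B),
    w = l ++ x :: y :: r → c y = true → c x = false → M x y = 0

/-- Siebenmann's no-square condition. -/
def HasNoSquare {B : Type*} (M : CoxeterMatrix B) : Prop :=
  ¬ ∃ s₁ s₂ t₁ t₂ : B,
      M s₁ t₁ = 2 ∧ M s₁ t₂ = 2 ∧ M s₂ t₁ = 2 ∧ M s₂ t₂ = 2 ∧
      s₁ ≠ s₂ ∧ M s₁ s₂ = 0 ∧ t₁ ≠ t₂ ∧ M t₁ t₂ = 0

namespace CoxeterSystem

variable {B : Type*} {W : Type*} [Group W] {M : CoxeterMatrix B} (cs : CoxeterSystem M W)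

theorem commute_simple_simple_of_eq_two {i i' : B} (h : M i i' = 2) :
    Commute (cs.simple i) (cs.simple i') := by
  have hsq : (cs.simple i * cs.simple i') ^ 2 = 1 := h ▸ cs.simple_mul_simple_pow i i'
  rw [pow_two] at hsq
  calc cs.simple i * cs.simple i' = (cs.simple i * cs.simple i')⁻¹ :=
        eq_inv_of_mul_eq_one_left hsq
    _ = cs.simple i' * cs.simple i := by rw [mul_inv_rev, inv_simple, inv_simple]

variable {cs}

theorem IsReduced.infix {ω ω' : List B} (hω : cs.IsReduced ω) (h : ω' <:+: ω) :
    cs.IsReduced ω' := by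
  obtain ⟨l, r, rfl⟩ := h
  simpa [List.take_append] using (hω.take (l ++ ω').length).drop l.length

theorem not_isReduced_cons_append_singleton {i : B} {ω : List B}
    (h : ∀ j ∈ ω, Commute (cs.simple i) (cs.simple j)) : ¬ cs.IsReduced (i :: (ω ++ [i])) := by
  intro hred
  have hcomm : Commute (cs.simple i) (cs.wordProd ω) :=
    Commute.list_prod_right _ _ (by simpa using h)
  have hprod : cs.wordProd (i :: (ω ++ [i])) = cs.wordProd ω := by
    rw [wordProd_cons, wordProd_append, wordProd_singleton, ← mul_assoc, hcomm.eq,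
      simple_mul_simple_cancel_right]
  have := cs.length_wordProd_le ω
  rw [← hprod, hred.eq] at this
  simp at this

/- Otherwise the two occurrences of the letter cancel, since it commutes with everything
between them. -/
theorem IsReduced.exists_not_commute_between {ω : List B} (hω : cs.IsReduced ω)
    {p q : Fin ω.length} (hpq : p < q) (heq : ω.get p = ω.get q) :
    ∃ k, p < k ∧ k < q ∧ ¬ Commute (cs.simple (ω.get p)) (cs.simple (ω.get k)) := by
  by_contra! hcomm
  obtain ⟨p, hp⟩ := p
  obtain ⟨q, hq⟩ := q
  simp only [List.get_eq_getElem, Fin.mk_lt_mk] at hpq heq hcomm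
  have hinfix : (ω.take (q + 1)).drop p = ω[p] :: ((ω.take q).drop (p + 1) ++ [ω[p]]) := by
    rw [← List.take_concat_get' ω q hq, List.drop_append_of_le_length (by simp; omega),
      List.drop_eq_getElem_cons (by simp; omega)]
    simp [heq]
  refine not_isReduced_cons_append_singleton (fun t ht => ?_)
    (hinfix ▸ hω.infix ((List.drop_suffix _ _).isInfix.trans (List.take_prefix _ _).isInfix))
  obtain ⟨n, hn, rfl⟩ := List.mem_iff_getElem.mp ht
  simp only [List.length_drop, List.length_take] at hn
  simpa using
    hcomm ⟨p + 1 + n, by omega⟩ (Fin.mk_lt_mk.mpr (by omega)) (Fin.mk_lt_mk.mpr (by omega))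

theorem eq_zero_of_not_commute (hra : ∀ s t : B, s ≠ t → M s t = 0 ∨ M s t = 2) {i i' : B}
    (h : ¬ Commute (cs.simple i) (cs.simple i')) : M i i' = 0 := by
  have hne : i ≠ i' := by rintro rfl; exact h (Commute.refl _)
  exact (hra i i' hne).resolve_right fun h2 => h (cs.commute_simple_simple_of_eq_two h2)

end CoxeterSystem

theorem HasNoSquare.ne_zero_of_eq_two {B : Type*} {M : CoxeterMatrix B} (hM : HasNoSquare M)
    {s₁ s₂ t₁ t₂ : B} (ht : M t₁ t₂ = 0) (h₁₁ : M s₁ t₁ = 2) (h₁₂ : M s₁ t₂ = 2)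
    (h₂₁ : M s₂ t₁ = 2) (h₂₂ : M s₂ t₂ = 2) : M s₁ s₂ ≠ 0 := by
  have ne_of_eq_zero : ∀ {x y : B}, M x y = 0 → x ≠ y := by
    rintro x _ h rfl
    simp at h
  exact fun hs => hM ⟨s₁, s₂, t₁, t₂, h₁₁, h₁₂, h₂₁, h₂₂, ne_of_eq_zero hs, hs,
    ne_of_eq_zero ht, ht⟩

theorem eq_or_eq_zero_of_color_eq {B : Type*} {M : CoxeterMatrix B} {c : B → Bool}
    (hcolor : ∀ s t : B, s ≠ t → c s = c t → M s t = 0) {s t : B} (h : c s = c t) :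
    s = t ∨ M s t = 0 :=
  or_iff_not_imp_left.mpr fun hst => hcolor s t hst h

def PreservesNoncommutingOrder {B α : Type*} [LinearOrder α] (M : CoxeterMatrix B)
    (w : List B) (f : Fin w.length → α) : Prop :=
  ∀ ⦃i j : Fin w.length⦄, i < j → (w.get i = w.get j ∨ M (w.get i) (w.get j) = 0) → f i < f j

namespace PreservesNoncommutingOrder

variable {B W α : Type*} [Group W] [LinearOrder α] {M : CoxeterMatrix B}
  {cs : CoxeterSystem M W} {c : B → Bool} {w : List B} {f : Fin w.length → α}
  {i j : Fin w.length}

theorem eq_two_of_lt_of_lt (hf : PreservesNoncommutingOrder M w f)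
    (hra : ∀ s t : B, s ≠ t → M s t = 0 ∨ M s t = 2) (hij : i < j) (hji : f j < f i) :
    M (w.get i) (w.get j) = 2 := by
  have hinv : ¬ (w.get i = w.get j ∨ M (w.get i) (w.get j) = 0) :=
    fun h => (hf hij h).not_gt hji
  rw [not_or] at hinv
  exact (hra _ _ hinv.1).resolve_left hinv.2

theorem lt_of_eq_of_color_eq_between (hf : PreservesNoncommutingOrder M w f)
    (hw : cs.IsReduced w) (hra : ∀ s t : B, s ≠ t → M s t = 0 ∨ M s t = 2)
    (hcolor : ∀ s t : B, s ≠ t → c s = c t → M s t = 0) {j₂ : Fin w.length}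
    (hij : i < j) (hjj₂ : j < j₂) (heq : w.get j = w.get j₂)
    (hbetween : ∀ k, j < k → k < j₂ → c (w.get k) = c (w.get i)) : f i < f j₂ := by
  obtain ⟨k, hjk, hkj₂, hk⟩ := hw.exists_not_commute_between hjj₂ heq
  have hk₀ : M (w.get k) (w.get j₂) = 0 := by
    rw [← heq, M.symmetric]
    exact CoxeterSystem.eq_zero_of_not_commute hra hk
  calc f i < f k :=
        hf (hij.trans hjk) (eq_or_eq_zero_of_color_eq hcolor (hbetween k hjk hkj₂).symm)
    _ < f j₂ := hf hkj₂ (.inr hk₀)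

theorem exists_eq_zero_of_color_eq (hf : PreservesNoncommutingOrder M w f)
    (hw : cs.IsReduced w) (hra : ∀ s t : B, s ≠ t → M s t = 0 ∨ M s t = 2)
    (hcolor : ∀ s t : B, s ≠ t → c s = c t → M s t = 0) (hij : i < j)
    (hc : c (w.get i) = c (w.get j)) :
    ∃ k, i < k ∧ k ≤ j ∧ f i < f k ∧ M (w.get i) (w.get k) = 0 := by
  rcases eq_or_eq_zero_of_color_eq hcolor hc with heq | h₀
  · obtain ⟨k, hik, hkj, hk⟩ := hw.exists_not_commute_between hij heq
    have hk₀ := CoxeterSystem.eq_zero_of_not_commute hra hk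
    exact ⟨k, hik, hkj.le, hf hik (.inr hk₀), hk₀⟩
  · exact ⟨j, hij, le_rfl, hf hij (.inr h₀), h₀⟩

end PreservesNoncommutingOrder

theorem racg_at_most_one_letter_beyond_second_general
    {B : Type*} {W : Type*} [Group W] {M : CoxeterMatrix B}
    (cs : CoxeterSystem M W)
    (hra : ∀ s t : B, s ≠ t → M s t = 0 ∨ M s t = 2)
    (hhyp : HasNoSquare M)
    (c : B → Bool)
    (hcolor : ∀ s t : B, s ≠ t → c s = c t → M s t = 0)
    (U V Wc : List B)
    (hUV : cs.IsReduced (U ++ V))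
    (φ : Fin (U ++ V).length ≃ Fin Wc.length)
    (horder : ∀ i j : Fin (U ++ V).length, (i : ℕ) < (j : ℕ) →
      ((U ++ V).get i = (U ++ V).get j ∨ M ((U ++ V).get i) ((U ++ V).get j) = 0) →
      (φ i : ℕ) < (φ j : ℕ))
    (j₁ j₂ : Fin (U ++ V).length)
    (hj₁U : U.length ≤ (j₁ : ℕ)) (hj₁j₂ : (j₁ : ℕ) < (j₂ : ℕ))
    (hj₁a : c ((U ++ V).get j₁) = true) (hj₂a : c ((U ++ V).get j₂) = true)
    (hj₂second : ∀ i : Fin (U ++ V).length,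
      (j₁ : ℕ) < (i : ℕ) → (i : ℕ) < (j₂ : ℕ) → c ((U ++ V).get i) = false) :
    ∀ i i' : Fin (U ++ V).length, (i : ℕ) < U.length → (i' : ℕ) < U.length →
      (φ j₂ : ℕ) < (φ i : ℕ) → (φ j₂ : ℕ) < (φ i' : ℕ) → i = i' := by
  intro i i' hiU hi'U hφi hφi'
  have hf : PreservesNoncommutingOrder M (U ++ V) φ := horder
  have ha : c ((U ++ V).get j₁) = c ((U ++ V).get j₂) := hj₁a.trans hj₂a.symm
  have h12 : φ j₁ < φ j₂ := hf hj₁j₂ (eq_or_eq_zero_of_color_eq hcolor ha)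
  have beyond : ∀ p : Fin (U ++ V).length, (p : ℕ) < U.length → φ j₂ < φ p →
      c ((U ++ V).get p) = false ∧ M ((U ++ V).get p) ((U ++ V).get j₁) = 2 ∧
        M ((U ++ V).get p) ((U ++ V).get j₂) = 2 := by
    intro p hpU hp
    have hpj₁ : p < j₁ := Fin.lt_def.mpr (hpU.trans_le hj₁U)
    refine ⟨?_, hf.eq_two_of_lt_of_lt hra hpj₁ (h12.trans hp),
      hf.eq_two_of_lt_of_lt hra (hpj₁.trans hj₁j₂) hp⟩
    by_contra hc
    exact (hf hpj₁ (eq_or_eq_zero_of_color_eq hcolor (by rw [hj₁a]; simpa using hc))).not_gt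
      (h12.trans hp)
  by_cases hj : (U ++ V).get j₁ = (U ++ V).get j₂
  · refine absurd hφi (hf.lt_of_eq_of_color_eq_between hUV hra hcolor
      (Fin.lt_def.mpr (hiU.trans_le hj₁U)) hj₁j₂ hj fun k hk₁ hk₂ => ?_).not_gt
    exact (hj₂second k hk₁ hk₂).trans (beyond i hiU hφi).1.symm
  have hM : M ((U ++ V).get j₁) ((U ++ V).get j₂) = 0 := hcolor _ _ hj ha
  wlog hii' : i ≤ i' generalizing i i'
  · exact (this i' i hi'U hiU hφi' hφi (le_of_not_ge hii')).symm
  refine hii'.eq_or_lt.resolve_right fun hlt => ?_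
  obtain ⟨k, hik, hki', hφk, hk₀⟩ := hf.exists_eq_zero_of_color_eq hUV hra hcolor hlt
    ((beyond i hiU hφi).1.trans (beyond i' hi'U hφi').1.symm)
  have hkU : (k : ℕ) < U.length := lt_of_le_of_lt hki' hi'U
  obtain ⟨-, hi₁, hi₂⟩ := beyond i hiU hφi
  obtain ⟨-, hk₁, hk₂⟩ := beyond k hkU (hφi.trans hφk)
  exact hhyp.ne_zero_of_eq_two hM hi₁ hi₂ hk₁ hk₂ hk₀

/-- Let `Γ` be a hyperbolic (no-square) 2-colored
right-angled Coxeter group, `U, V` canonical a-representations with `U ++ V`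
reduced, and let `Wc` be the canonical a-representation of the product, with
`φ` the canonical reduction map (a bijection of letter positions matching the
letters and preserving the relative order of any two equal or non-commuting
letters). Let `j₁ < j₂` be the positions of the first two `a`-letters
`a_{p+1}, a_{p+2}` of `V`. Then at most one letter of `U` is moved by `φ` to
the right of `a_{p+2}`. -/
theorem racg_at_most_one_letter_beyond_second
    {B : Type*} {W : Type*} [Group W] {M : CoxeterMatrix B}
    (cs : CoxeterSystem M W)
    (hra : ∀ s t : B, s ≠ t → M s t = 0 ∨ M s t = 2)
    (hhyp : HasNoSquare M)
    (c : B → Bool)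
    (hcolor : ∀ s t : B, s ≠ t → c s = c t → M s t = 0)
    (U V Wc : List B)
    (hU : cs.IsReduced U ∧ IsLeftARep M c U)
    (hV : cs.IsReduced V ∧ IsLeftARep M c V)
    (hUV : cs.IsReduced (U ++ V))
    (hWc : cs.IsReduced Wc ∧ IsLeftARep M c Wc)
    (hprod : cs.wordProd Wc = cs.wordProd (U ++ V))
    (φ : Fin (U ++ V).length ≃ Fin Wc.length)
    (hletters : ∀ i : Fin (U ++ V).length, (U ++ V).get i = Wc.get (φ i))
    (horder : ∀ i j : Fin (U ++ V).length, (i : ℕ) < (j : ℕ) →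
      ((U ++ V).get i = (U ++ V).get j ∨ M ((U ++ V).get i) ((U ++ V).get j) = 0) →
      (φ i : ℕ) < (φ j : ℕ))
    (j₁ j₂ : Fin (U ++ V).length)
    (hj₁U : U.length ≤ (j₁ : ℕ)) (hj₁j₂ : (j₁ : ℕ) < (j₂ : ℕ))
    (hj₁a : c ((U ++ V).get j₁) = true) (hj₂a : c ((U ++ V).get j₂) = true)
    (hj₁first : ∀ i : Fin (U ++ V).length,
      U.length ≤ (i : ℕ) → (i : ℕ) < (j₁ : ℕ) → c ((U ++ V).get i) = false)
    (hj₂second : ∀ i : Fin (U ++ V).length,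
      (j₁ : ℕ) < (i : ℕ) → (i : ℕ) < (j₂ : ℕ) → c ((U ++ V).get i) = false) :
    ∀ i i' : Fin (U ++ V).length, (i : ℕ) < U.length → (i' : ℕ) < U.length →
      (φ j₂ : ℕ) < (φ i : ℕ) → (φ j₂ : ℕ) < (φ i' : ℕ) → i = i' :=
  racg_at_most_one_letter_beyond_second_general cs hra hhyp c hcolor U V Wc hUV φ horder j₁ j₂ hj₁U
    hj₁j₂ hj₁a hj₂a hj₂second
end
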